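/- The concatenation of two right-skew segments with nondecreasing densities is right-skew: if A(i,j) and A(j+1,k) are right-skew and μ(i,j) ≤ μ(j+1,k), then A(i,k) is right-skew. -/
import Mathlib


noncomputable def density (a w : ℕ → ℝ) (i j : ℕ) : ℝ :=
  (∑ t ∈ Finset.Icc i j, a t) / (∑ t ∈ Finset.Icc i j, w t)

def RightSkew (a w : ℕ → ℝ) (i k : ℕ) : Prop :=
  ∀ m, i ≤ m → m < k → density a w i m ≤ density a w (m + 1) k

private lemma Icc_sum_split (f : ℕ → ℝ) {i m k : ℕ} (h1 : i ≤ m + 1) (h2 : m ≤ k) :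
    ∑ t ∈ Finset.Icc i k, f t
      = ∑ t ∈ Finset.Icc i m, f t + ∑ t ∈ Finset.Icc (m + 1) k, f t := by
  rw [← Finset.Ico_add_one_right_eq_Icc, ← Finset.Ico_add_one_right_eq_Icc, ← Finset.Ico_add_one_right_eq_Icc,
    ← Finset.sum_Ico_consecutive _ h1 (by omega)]

private lemma wsum_pos (w : ℕ → ℝ) (hw : ∀ t, 0 < w t) {i m : ℕ} (h : i ≤ m) :
    0 < ∑ t ∈ Finset.Icc i m, w t :=
  Finset.sum_pos (fun t _ => hw t) (Finset.nonempty_Icc.mpr h)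

private lemma le_mediant {c x y p q : ℝ} (hp : 0 < p) (hq : 0 < q)
    (h1 : c ≤ x / p) (h2 : c ≤ y / q) : c ≤ (x + y) / (p + q) := by
  rw [le_div_iff₀ hp] at h1
  rw [le_div_iff₀ hq] at h2
  rw [le_div_iff₀ (by linarith)]
  nlinarith

private lemma mediant_le {c x y p q : ℝ} (hp : 0 < p) (hq : 0 < q)
    (h1 : x / p ≤ c) (h2 : y / q ≤ c) : (x + y) / (p + q) ≤ c := by
  rw [div_le_iff₀ hp] at h1
  rw [div_le_iff₀ hq] at h2
  rw [div_le_iff₀ (by linarith)]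
  nlinarith

private lemma le_density_of_split (a w : ℕ → ℝ) (hw : ∀ t, 0 < w t) {c : ℝ} {i m k : ℕ}
    (him : i ≤ m) (hmk : m < k)
    (h1 : c ≤ density a w i m) (h2 : c ≤ density a w (m + 1) k) :
    c ≤ density a w i k := by
  unfold density at *
  rw [Icc_sum_split a (m := m) (by omega) (by omega), Icc_sum_split w (m := m) (by omega) (by omega)]
  exact le_mediant (wsum_pos w hw him) (wsum_pos w hw (by omega)) h1 h2

private lemma density_le_of_split (a w : ℕ → ℝ) (hw : ∀ t, 0 < w t) {c : ℝ} {i m k : ℕ}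
    (him : i ≤ m) (hmk : m < k)
    (h1 : density a w i m ≤ c) (h2 : density a w (m + 1) k ≤ c) :
    density a w i k ≤ c := by
  unfold density at *
  rw [Icc_sum_split a (m := m) (by omega) (by omega), Icc_sum_split w (m := m) (by omega) (by omega)]
  exact mediant_le (wsum_pos w hw him) (wsum_pos w hw (by omega)) h1 h2

theorem rightSkew_append (a w : ℕ → ℝ) (hw : ∀ t, 0 < w t)
    (i j k : ℕ) (hij : i ≤ j) (hjk : j < k)
    (h1 : RightSkew a w i j) (h2 : RightSkew a w (j + 1) k)
    (h : density a w i j ≤ density a w (j + 1) k) :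
    RightSkew a w i k := by
  intro m him hmk
  rcases lt_trichotomy m j with hmj | rfl | hjm
  · -- i ≤ m < j < k : μ(i,m) ≤ both μ(m+1,j) and μ(j+1,k)
    have hA : density a w i m ≤ density a w (m + 1) j := h1 m him hmj
    have hB : density a w i m ≤ density a w i j :=
      le_density_of_split a w hw him hmj le_rfl hA
    have hC : density a w i m ≤ density a w (j + 1) k := le_trans hB h
    exact le_density_of_split a w hw (by omega) (by omega) hA hC
  · exact h
  · -- j < m < k : μ(i,m) mediant of μ(i,j), μ(j+1,m); both ≤ μ(m+1,k)
    have hA : density a w (j + 1) m ≤ density a w (m + 1) k := h2 m (by omega) hmk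
    have hB : density a w (j + 1) k ≤ density a w (m + 1) k :=
      density_le_of_split a w hw (by omega) (by omega) hA le_rfl
    have hC : density a w i j ≤ density a w (m + 1) k := le_trans h hB
    exact density_le_of_split a w hw hij (by omega) hC hA
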